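/- arXiv:1310.7359 — 2 statements merged into one kernel-verified Lean document; each statement's English description precedes it below -/
import Mathlib

section
/- The supremum of τ_t(H)/(n(H)+m(H)) over all 2-uniform hypergraphs H with no isolated vertices, no isolated edges and no multiple edges equals 2/5. -/
open Finset

attribute [local instance] Classical.propDecidable

variable {V : Type*} [Fintype V] [DecidableEq V]

/-- Two vertices are adjacent (neighbors) in a hypergraph if they are distinct
and share a common edge. -/
def HAdj (E : Finset (Finset V)) (u v : V) : Prop :=
  u ≠ v ∧ ∃ e ∈ E, u ∈ e ∧ v ∈ e

/-- A hypergraph is `k`-uniform if every edge has exactly `k` vertices. -/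
def Uniform (k : ℕ) (E : Finset (Finset V)) : Prop := ∀ e ∈ E, e.card = k

/-- No edge is isolated: every edge intersects some other edge. -/
def NoIsolatedEdge (E : Finset (Finset V)) : Prop :=
  ∀ e ∈ E, ∃ f ∈ E, f ≠ e ∧ ∃ v, v ∈ e ∧ v ∈ f

/-- The degree of a vertex: the number of edges containing it. -/
def hdeg (E : Finset (Finset V)) (v : V) : ℕ := (E.filter (fun e => v ∈ e)).card

/-- The number of vertices of degree exactly 1. -/
noncomputable def n1 (E : Finset (Finset V)) : ℕ :=
  (univ.filter (fun v => hdeg E v = 1)).card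

/-- The total domination number: minimum size of a set `D` such that every
vertex has a neighbor in `D`. -/
noncomputable def gammat (E : Finset (Finset V)) : ℕ :=
  sInf {n | ∃ D : Finset V, (∀ v : V, ∃ u ∈ D, HAdj E v u) ∧ D.card = n}

/-- The transversal number: minimum size of a vertex set meeting every edge. -/
noncomputable def tauh (E : Finset (Finset V)) : ℕ :=
  sInf {n | ∃ T : Finset V, (∀ e ∈ E, ∃ v ∈ T, v ∈ e) ∧ T.card = n}

/-- The total transversal number: minimum size of a transversal `T` in which
every vertex of `T` has a neighbor in `T`. -/
noncomputable def taut (E : Finset (Finset V)) : ℕ :=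
  sInf {n | ∃ T : Finset V, (∀ e ∈ E, ∃ v ∈ T, v ∈ e) ∧
    (∀ v ∈ T, ∃ u ∈ T, HAdj E v u) ∧ T.card = n}

/-- The strong transversal number: minimum size of a vertex set containing at
least two vertices from every edge. -/
noncomputable def tau2 (E : Finset (Finset V)) : ℕ :=
  sInf {n | ∃ T : Finset V, (∀ e ∈ E, 2 ≤ (e ∩ T).card) ∧ T.card = n}

/-!
Induct on the number of edges. For an edge `vu`, delete the set `F` of edges meeting it, then the
set `I` of edges this leaves isolated. A total transversal `T'` of the rest, together with `v`,
`u` and one vertex from each edge of `I` adjacent to `v` or `u` (it exists because that edge was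
not isolated before), is a total transversal of size at most `|T'| + 2 + |I|`. Meanwhile `n + m`
drops by `|P| + |F| + 3|I|`, where `P` is the set of vertices lying only on edges of `F`, so the
bound `5 τ_t ≤ 2 (n + m)` is inherited as soon as `|P| + |F| ≥ 5`. Without isolated edges such
an edge exists: take `v` of degree at least two; either some neighbour `z` of `v` lies on an edge
avoiding `v` (then `vz` has `v`, `z` in `P` and three edges in `F`), or all neighbours of `v` are
leaves (then for two of them, `u` and `z`, the edge `vu` has `v`, `u`, `z` in `P` and two edges
in `F`). The path on three vertices attains `2/5`.
-/

section

variable {α : Type*}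

def IsTotalTransversal (E : Finset (Finset α)) (T : Finset α) : Prop :=
  (∀ e ∈ E, ∃ x ∈ T, x ∈ e) ∧ ∀ x ∈ T, ∃ y ∈ T, HAdj E x y

noncomputable def isolatedEdges (E : Finset (Finset α)) : Finset (Finset α) :=
  E.filter fun g => ∀ g' ∈ E, g' ≠ g → Disjoint g' g

noncomputable def incidentEdges (E : Finset (Finset α)) (v u : α) : Finset (Finset α) :=
  E.filter fun g => v ∈ g ∨ u ∈ g

noncomputable def vertexSupport (E : Finset (Finset α)) : Finset α :=
  E.biUnion id

def HasSmallTotalTransversal (E : Finset (Finset α)) : Prop :=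
  ∃ T, IsTotalTransversal E T ∧ 5 * T.card ≤ 2 * ((vertexSupport E).card + E.card)

/-- The vertices all of whose edges meet `{v, u}`. -/
noncomputable def privateVertices (E : Finset (Finset α)) (v u : α) : Finset α :=
  vertexSupport E \ vertexSupport (E \ incidentEdges E v u)

variable {E E' : Finset (Finset α)} {T : Finset α} {e : Finset α} {v u x : α}

lemma HAdj.mono (h : E ⊆ E') (hvu : HAdj E v u) : HAdj E' v u :=
  let ⟨hne, e, he, hv, hu⟩ := hvu
  ⟨hne, e, h he, hv, hu⟩

lemma HAdj.symm (hvu : HAdj E v u) : HAdj E u v :=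
  let ⟨hne, e, he, hv, hu⟩ := hvu
  ⟨hne.symm, e, he, hu, hv⟩

lemma isolatedEdges_subset : isolatedEdges E ⊆ E := filter_subset _ _

lemma disjoint_of_mem_isolatedEdges {g : Finset α} (hg : g ∈ isolatedEdges E) (he : e ∈ E)
    (hne : e ≠ g) : Disjoint e g :=
  (mem_filter.1 hg).2 e he hne

lemma pairwiseDisjoint_isolatedEdges :
    (isolatedEdges E : Set (Finset α)).PairwiseDisjoint id := fun _ hf _ hg hne =>
  disjoint_of_mem_isolatedEdges hg (isolatedEdges_subset hf) hne

lemma noIsolatedEdge_sdiff_isolatedEdges : NoIsolatedEdge (E \ isolatedEdges E) := by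
  intro g hg
  obtain ⟨hgE, hgI⟩ := mem_sdiff.1 hg
  simp only [isolatedEdges, mem_filter, hgE, true_and, not_forall] at hgI
  obtain ⟨g', hg'E, hne, hmeet⟩ := hgI
  obtain ⟨x, hxg', hxg⟩ := not_disjoint_iff.1 hmeet
  have hg'I : g' ∉ isolatedEdges E := fun h =>
    hmeet (disjoint_of_mem_isolatedEdges h hgE (Ne.symm hne)).symm
  exact ⟨g', mem_sdiff.2 ⟨hg'E, hg'I⟩, hne, x, hxg, hxg'⟩

lemma mem_incidentEdges {g : Finset α} : g ∈ incidentEdges E v u ↔ g ∈ E ∧ (v ∈ g ∨ u ∈ g) :=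
  mem_filter

lemma incidentEdges_subset : incidentEdges E v u ⊆ E := filter_subset _ _

lemma taut_le_card (hT : IsTotalTransversal E T) : taut E ≤ T.card :=
  Nat.sInf_le ⟨T, hT.1, hT.2, rfl⟩

lemma IsTotalTransversal.two_le_card (hT : IsTotalTransversal E T) (hE : E.Nonempty) :
    2 ≤ T.card := by
  obtain ⟨e, he⟩ := hE
  obtain ⟨x, hxT, -⟩ := hT.1 e he
  obtain ⟨y, hyT, hxy⟩ := hT.2 x hxT
  exact one_lt_card.2 ⟨x, hxT, y, hyT, hxy.1⟩

lemma two_le_taut (hE : E.Nonempty) (h : ∃ T, IsTotalTransversal E T) : 2 ≤ taut E := by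
  obtain ⟨T, hcov, htot, hcard⟩ :=
    Nat.sInf_mem (s := {n | ∃ T : Finset α, (∀ e ∈ E, ∃ v ∈ T, v ∈ e) ∧
      (∀ v ∈ T, ∃ u ∈ T, HAdj E v u) ∧ T.card = n})
      (let ⟨T, hT⟩ := h; ⟨T.card, T, hT.1, hT.2, rfl⟩)
  exact (IsTotalTransversal.two_le_card ⟨hcov, htot⟩ hE).trans_eq hcard

lemma IsTotalTransversal.union (hT : IsTotalTransversal E' T) (hE' : E' ⊆ E) {S : Finset α}
    (hS : ∀ x ∈ S, ∃ y ∈ S, HAdj E x y) (hcov : ∀ e ∈ E \ E', ∃ x ∈ S, x ∈ e) :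
    IsTotalTransversal E (S ∪ T) := by
  refine ⟨fun e he => ?_, fun x hx => ?_⟩
  · by_cases heE' : e ∈ E'
    · obtain ⟨x, hxT, hxe⟩ := hT.1 e heE'
      exact ⟨x, mem_union_right _ hxT, hxe⟩
    · obtain ⟨x, hxS, hxe⟩ := hcov e (mem_sdiff.2 ⟨he, heE'⟩)
      exact ⟨x, mem_union_left _ hxS, hxe⟩
  · rcases mem_union.1 hx with hxS | hxT
    · obtain ⟨y, hyS, hxy⟩ := hS x hxS
      exact ⟨y, mem_union_left _ hyS, hxy⟩
    · obtain ⟨y, hyT, hxy⟩ := hT.2 x hxT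
      exact ⟨y, mem_union_right _ hyT, hxy.mono hE'⟩

lemma exists_adj_mem_insert_insert {A : Finset α} (hvu : HAdj E v u)
    (hA : ∀ a ∈ A, HAdj E a v ∨ HAdj E a u) :
    ∀ x ∈ insert v (insert u A), ∃ y ∈ insert v (insert u A), HAdj E x y := by
  intro x hx
  rcases mem_insert.1 hx with rfl | hx
  · exact ⟨u, by simp, hvu⟩
  rcases mem_insert.1 hx with rfl | hxA
  · exact ⟨v, by simp, hvu.symm⟩
  rcases hA x hxA with h | h
  · exact ⟨v, by simp, h⟩
  · exact ⟨u, by simp, h⟩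

lemma exists_hittingSet_card_le {I : Finset (Finset α)} {p : α → Prop}
    (h : ∀ f ∈ I, ∃ a ∈ f, p a) :
    ∃ A : Finset α, A.card ≤ I.card ∧ (∀ a ∈ A, p a) ∧ ∀ f ∈ I, ∃ a ∈ A, a ∈ f := by
  choose pick hpick using h
  refine ⟨I.attach.image fun f => pick f.1 f.2, card_image_le.trans_eq card_attach, ?_,
    fun f hf => ⟨pick f hf, mem_image_of_mem _ (mem_attach _ ⟨f, hf⟩), (hpick f hf).1⟩⟩
  simp only [mem_image, mem_attach, true_and, Subtype.exists]
  rintro _ ⟨f, hf, rfl⟩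
  exact (hpick f hf).2

lemma exists_mem_adj_of_mem_isolatedEdges (hNI : NoIsolatedEdge E) {f : Finset α}
    (hf : f ∈ isolatedEdges (E \ incidentEdges E v u)) : ∃ a ∈ f, HAdj E a v ∨ HAdj E a u := by
  have hf0 := isolatedEdges_subset hf
  obtain ⟨hfE, hfF⟩ := mem_sdiff.1 hf0
  obtain ⟨g, hgE, hgf, a, haf, hag⟩ := hNI f hfE
  have hgF : g ∈ incidentEdges E v u := by
    by_contra hgF
    exact not_disjoint_iff.2 ⟨a, hag, haf⟩
      (disjoint_of_mem_isolatedEdges hf (mem_sdiff.2 ⟨hgE, hgF⟩) hgf)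
  have hav : a ≠ v := fun h => hfF (mem_incidentEdges.2 ⟨hfE, Or.inl (h ▸ haf)⟩)
  have hau : a ≠ u := fun h => hfF (mem_incidentEdges.2 ⟨hfE, Or.inr (h ▸ haf)⟩)
  refine ⟨a, haf, ?_⟩
  rcases (mem_incidentEdges.1 hgF).2 with hvg | hug
  · exact Or.inl ⟨hav, g, hgE, hag, hvg⟩
  · exact Or.inr ⟨hau, g, hgE, hag, hug⟩

lemma exists_eq_pair_of_card_eq_two (he : e.card = 2) (hv : v ∈ e) : ∃ u, u ≠ v ∧ e = {v, u} := by
  obtain ⟨a, b, hab, rfl⟩ := card_eq_two.1 he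
  rcases mem_insert.1 hv with rfl | hv
  · exact ⟨b, hab.symm, rfl⟩
  · rw [mem_singleton.1 hv]
    exact ⟨a, hab, pair_comm a b⟩

lemma mem_vertexSupport : x ∈ vertexSupport E ↔ ∃ e ∈ E, x ∈ e := by
  simp [vertexSupport]

lemma vertexSupport_mono (h : E ⊆ E') : vertexSupport E ⊆ vertexSupport E' := fun _ hx =>
  let ⟨e, he, hxe⟩ := mem_vertexSupport.1 hx
  mem_vertexSupport.2 ⟨e, h he, hxe⟩

lemma card_vertexSupport_of_pairwiseDisjoint {k : ℕ} (hU : Uniform k E)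
    (hd : (E : Set (Finset α)).PairwiseDisjoint id) : (vertexSupport E).card = k * E.card := by
  rw [vertexSupport, card_biUnion hd]
  exact (sum_const_nat hU).trans (mul_comm _ _)

lemma card_vertexSupport_union_of_disjoint {A B : Finset (Finset α)}
    (h : ∀ a ∈ A, ∀ b ∈ B, Disjoint a b) :
    (vertexSupport (A ∪ B)).card = (vertexSupport A).card + (vertexSupport B).card := by
  rw [vertexSupport, vertexSupport, vertexSupport, union_biUnion, card_union_of_disjoint]
  simp only [disjoint_biUnion_left, disjoint_biUnion_right, id]
  exact fun b hb a ha => h a ha b hb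

lemma card_vertexSupport_eq_sdiff_isolatedEdges_add (hU : Uniform 2 E) :
    (vertexSupport E).card =
      (vertexSupport (E \ isolatedEdges E)).card + 2 * (isolatedEdges E).card := by
  have hI := card_vertexSupport_of_pairwiseDisjoint (fun g hg => hU g (isolatedEdges_subset hg))
    (pairwiseDisjoint_isolatedEdges (E := E))
  have hsplit := card_vertexSupport_union_of_disjoint (A := E \ isolatedEdges E)
    (B := isolatedEdges E) fun a ha b hb =>
      disjoint_of_mem_isolatedEdges hb (mem_sdiff.1 ha).1 fun hab => (mem_sdiff.1 ha).2 (hab ▸ hb)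
  rw [sdiff_union_of_subset isolatedEdges_subset] at hsplit
  omega

lemma mem_privateVertices (he : e ∈ E) (hxe : x ∈ e)
    (hx : ∀ g ∈ E, x ∈ g → v ∈ g ∨ u ∈ g) : x ∈ privateVertices E v u := by
  refine mem_sdiff.2 ⟨mem_vertexSupport.2 ⟨e, he, hxe⟩, fun hx0 => ?_⟩
  obtain ⟨g, hg, hxg⟩ := mem_vertexSupport.1 hx0
  obtain ⟨hgE, hgF⟩ := mem_sdiff.1 hg
  exact hgF (mem_incidentEdges.2 ⟨hgE, hx g hgE hxg⟩)

lemma left_mem_privateVertices (hvu : HAdj E v u) : v ∈ privateVertices E v u :=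
  let ⟨_, _, he, hv, _⟩ := hvu
  mem_privateVertices he hv fun _ _ => Or.inl

lemma right_mem_privateVertices (hvu : HAdj E v u) : u ∈ privateVertices E v u :=
  let ⟨_, _, he, _, hu⟩ := hvu
  mem_privateVertices he hu fun _ _ => Or.inr

lemma HasSmallTotalTransversal.of_adj
    (ih : ∀ E' ⊂ E, Uniform 2 E' → NoIsolatedEdge E' → HasSmallTotalTransversal E')
    (hU : Uniform 2 E) (hNI : NoIsolatedEdge E) (hvu : HAdj E v u)
    (h5 : 5 ≤ (privateVertices E v u).card + (incidentEdges E v u).card) :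
    HasSmallTotalTransversal E := by
  set F := incidentEdges E v u
  set E₀ := E \ F
  set I := isolatedEdges E₀
  set E₂ := E₀ \ I
  have hE₂E : E₂ ⊆ E := sdiff_subset.trans sdiff_subset
  have hE₂ : E₂ ⊂ E := by
    obtain ⟨-, e, he, hve, -⟩ := hvu
    refine (ssubset_iff_of_subset hE₂E).2 ⟨e, he, fun h => ?_⟩
    exact (mem_sdiff.1 (sdiff_subset h)).2 (mem_incidentEdges.2 ⟨he, Or.inl hve⟩)
  obtain ⟨T', hT', hT'card⟩ :=
    ih E₂ hE₂ (fun g hg => hU g (hE₂E hg)) noIsolatedEdge_sdiff_isolatedEdges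
  obtain ⟨A, hAcard, hAadj, hAcov⟩ :=
    exists_hittingSet_card_le (I := I) fun f hf =>
      exists_mem_adj_of_mem_isolatedEdges (v := v) (u := u) hNI hf
  refine ⟨insert v (insert u A) ∪ T',
    hT'.union hE₂E (exists_adj_mem_insert_insert hvu hAadj) ?_, ?_⟩
  · intro g hg
    obtain ⟨hgE, hgE₂⟩ := mem_sdiff.1 hg
    by_cases hgF : g ∈ F
    · rcases (mem_incidentEdges.1 hgF).2 with h | h
      · exact ⟨v, by simp, h⟩
      · exact ⟨u, by simp, h⟩
    · have hgI : g ∈ I := by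
        by_contra hgI
        exact hgE₂ (mem_sdiff.2 ⟨mem_sdiff.2 ⟨hgE, hgF⟩, hgI⟩)
      obtain ⟨a, haA, hag⟩ := hAcov g hgI
      exact ⟨a, by simp [haA], hag⟩
  · have hT : (insert v (insert u A) ∪ T').card ≤ A.card + 2 + T'.card :=
      (card_union_le _ _).trans <| Nat.add_le_add_right
        ((card_insert_le _ _).trans (Nat.add_le_add_right (card_insert_le _ _) 1)) _
    have hn : (vertexSupport E).card = (privateVertices E v u).card + (vertexSupport E₀).card :=
      (card_sdiff_add_card_eq_card (vertexSupport_mono sdiff_subset)).symm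
    have hn₀ : (vertexSupport E₀).card = (vertexSupport E₂).card + 2 * I.card :=
      card_vertexSupport_eq_sdiff_isolatedEdges_add fun g hg => hU g (sdiff_subset hg)
    have hm : E.card = E₀.card + F.card := (card_sdiff_add_card_eq_card incidentEdges_subset).symm
    have hm₀ : E₀.card = E₂.card + I.card :=
      (card_sdiff_add_card_eq_card isolatedEdges_subset).symm
    omega

lemma exists_adj_five_le_card_add_card (hU : Uniform 2 E) (hNI : NoIsolatedEdge E)
    (hE : E.Nonempty) :
    ∃ v u, HAdj E v u ∧ 5 ≤ (privateVertices E v u).card + (incidentEdges E v u).card := by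
  obtain ⟨e, he⟩ := hE
  obtain ⟨f, hf, hfe, v, hve, hvf⟩ := hNI e he
  by_cases hbranch : ∃ z, HAdj E v z ∧ ∃ g ∈ E, z ∈ g ∧ v ∉ g
  · obtain ⟨z, hvz, g, hg, hzg, hvg⟩ := hbranch
    have hP : ({v, z} : Finset α) ⊆ privateVertices E v z := by
      simp only [insert_subset_iff, singleton_subset_iff]
      exact ⟨left_mem_privateVertices hvz, right_mem_privateVertices hvz⟩
    have hF : ({e, f, g} : Finset (Finset α)) ⊆ incidentEdges E v z := by
      simp only [insert_subset_iff, singleton_subset_iff, mem_incidentEdges]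
      exact ⟨⟨he, .inl hve⟩, ⟨hf, .inl hvf⟩, ⟨hg, .inr hzg⟩⟩
    refine ⟨v, z, hvz, ?_⟩
    calc 5 = ({v, z} : Finset α).card + ({e, f, g} : Finset (Finset α)).card := by
          rw [card_pair hvz.1, card_eq_three.2 ⟨e, f, g, hfe.symm, fun h => hvg (h ▸ hve),
            fun h => hvg (h ▸ hvf), rfl⟩]
      _ ≤ _ := add_le_add (card_le_card hP) (card_le_card hF)
  · push Not at hbranch
    obtain ⟨u, huv, rfl⟩ := exists_eq_pair_of_card_eq_two (hU e he) hve
    obtain ⟨z, hzv, rfl⟩ := exists_eq_pair_of_card_eq_two (hU f hf) hvf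
    have hvu : HAdj E v u := ⟨huv.symm, _, he, hve, by simp⟩
    have hvz : HAdj E v z := ⟨hzv.symm, _, hf, hvf, by simp⟩
    have huz : u ≠ z := by
      rintro rfl
      exact hfe rfl
    have hP : ({v, u, z} : Finset α) ⊆ privateVertices E v u := by
      simp only [insert_subset_iff, singleton_subset_iff]
      exact ⟨left_mem_privateVertices hvu, right_mem_privateVertices hvu,
        mem_privateVertices hf (by simp) fun g hg hzg => .inl (hbranch z hvz g hg hzg)⟩
    have hF : ({{v, u}, {v, z}} : Finset (Finset α)) ⊆ incidentEdges E v u := by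
      simp only [insert_subset_iff, singleton_subset_iff, mem_incidentEdges]
      exact ⟨⟨he, .inl hve⟩, ⟨hf, .inl hvf⟩⟩
    refine ⟨v, u, hvu, ?_⟩
    calc 5 = ({v, u, z} : Finset α).card + ({{v, u}, {v, z}} : Finset (Finset α)).card := by
          rw [card_eq_three.2 ⟨v, u, z, huv.symm, hzv.symm, huz, rfl⟩, card_pair (Ne.symm hfe)]
      _ ≤ _ := add_le_add (card_le_card hP) (card_le_card hF)

theorem hasSmallTotalTransversal (hU : Uniform 2 E) (hNI : NoIsolatedEdge E) :
    HasSmallTotalTransversal E := by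
  induction E using Finset.strongInduction with
  | H E ih =>
    rcases E.eq_empty_or_nonempty with rfl | hE
    · exact ⟨∅, ⟨by simp, by simp⟩, by simp⟩
    obtain ⟨v, u, hvu, h5⟩ := exists_adj_five_le_card_add_card hU hNI hE
    exact .of_adj ih hU hNI hvu h5

theorem five_mul_taut_le [Fintype α] (hU : Uniform 2 E) (hNI : NoIsolatedEdge E)
    (hcover : ∀ x : α, ∃ e ∈ E, x ∈ e) : 5 * taut E ≤ 2 * (Fintype.card α + E.card) := by
  obtain ⟨T, hT, hcard⟩ := hasSmallTotalTransversal hU hNI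
  rw [eq_univ_of_forall fun x => mem_vertexSupport.2 (hcover x), card_univ] at hcard
  exact (Nat.mul_le_mul_left 5 (taut_le_card hT)).trans hcard

end

lemma taut_path_three : taut ({{0, 1}, {1, 2}} : Finset (Finset (Fin 3))) = 2 := by
  have hT : IsTotalTransversal ({{0, 1}, {1, 2}} : Finset (Finset (Fin 3))) {0, 1} := by
    refine ⟨by decide, ?_⟩
    simp only [HAdj]
    decide
  exact le_antisymm (taut_le_card hT) (two_le_taut ⟨{0, 1}, by simp⟩ ⟨_, hT⟩)

/-- The supremum of `τ_t(H)/(n(H)+m(H))` over all 2-uniform hypergraphs `H`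
with no isolated vertices, no isolated edges and no multiple edges equals
`2/5`. -/
theorem stmt7 :
    IsLUB {x : ℝ | ∃ (V : Type) (i : Fintype V) (E : Finset (Finset V)),
      Uniform 2 E ∧ (∀ v : V, ∃ e ∈ E, v ∈ e) ∧ NoIsolatedEdge E ∧
      x = (taut E : ℝ) / (@Fintype.card V i + E.card)} (2 / 5) := by
  refine ⟨?_, fun b hb => hb ⟨Fin 3, inferInstance, {{0, 1}, {1, 2}}, ?_, ?_, ?_, ?_⟩⟩
  · rintro x ⟨W, i, E, hU, hcover, hNI, rfl⟩
    have h : ((5 * taut E : ℕ) : ℝ) ≤ ((2 * (Fintype.card W + E.card) : ℕ) : ℝ) :=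
      Nat.cast_le.2 (five_mul_taut_le hU hNI hcover)
    push_cast at h
    exact div_le_of_le_mul₀ (by positivity) (by norm_num) (by linarith)
  · simp only [Uniform]
    decide
  · decide
  · simp only [NoIsolatedEdge]
    decide
  · rw [taut_path_three, show #({{0, 1}, {1, 2}} : Finset (Finset (Fin 3))) = 2 by decide]
    norm_num
end

section
/- Let k ≥ 3, let F be a k-uniform hypergraph with no isolated vertices, no isolated edges, no multiple edges, and with no two edges intersecting in exactly k−1 vertices; let H be obtained from F by adding, for each vertex v of F, k+1 new vertices v₁,…,v_{k+1} and two new k-edges {v,v₁,…,v_{k−1}} and {v₂,…,v_{k+1}}. Then γ_t(H) = 2·n(H)/(k+2). -/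
open Finset

attribute [local instance] Classical.propDecidable

variable {V : Type*} [Fintype V] [DecidableEq V]

/-- For a vertex `v` of `F`, the added edge `{v, v₁, …, v_{k−1}}`, where the new
vertex `v_j` (for `1 ≤ j ≤ k+1`) is encoded as `Sum.inr (v, j-1)` with
`j - 1 : Fin (k+1)`. -/
noncomputable def star1 {α : Type*} (k : ℕ) (v : α) : Finset (α ⊕ α × Fin (k + 1)) :=
  insert (Sum.inl v)
    ((univ.filter (fun i : Fin (k + 1) => (i : ℕ) < k - 1)).image
      (fun i => Sum.inr (v, i)))

/-- For a vertex `v` of `F`, the added edge `{v₂, …, v_{k+1}}`. -/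
noncomputable def star2 {α : Type*} (k : ℕ) (v : α) : Finset (α ⊕ α × Fin (k + 1)) :=
  (univ.filter (fun i : Fin (k + 1) => 1 ≤ (i : ℕ))).image (fun i => Sum.inr (v, i))

/-!
The set `{v, v₂ : v ∈ V(F)}` is a total dominating set of `H` of size `2·n(F)`. Conversely, the
vertex `v_{k+1}` lies only in the edge `{v₂, …, v_{k+1}}`, so a total dominating set `D` contains
some `v_j` from it; `v_j` in turn needs a neighbour in `D`, and all its neighbours lie in the two
edges added at `v`. So `D` meets every block `{v, v₁, …, v_{k+1}}` in at least two vertices, and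
`γ_t(H) = 2·n(F) = 2·n(H)/(k+2)`.
-/

def IsTotalDominating {β : Type*} (E : Finset (Finset β)) (D : Finset β) : Prop :=
  ∀ v : β, ∃ u ∈ D, HAdj E v u

lemma gammat_eq_of_isTotalDominating {β : Type*} {E : Finset (Finset β)} {D : Finset β}
    (hD : IsTotalDominating E D) (hmin : ∀ D', IsTotalDominating E D' → D.card ≤ D'.card) :
    gammat E = D.card :=
  le_antisymm (Nat.sInf_le ⟨D, hD, rfl⟩)
    (le_csInf ⟨D.card, D, hD, rfl⟩ (by rintro _ ⟨D', hD', rfl⟩; exact hmin D' hD'))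

namespace StarGadget

variable {α : Type*}

section Membership

variable (k : ℕ) (v w : α) (i : Fin (k + 1))

@[simp]
lemma inl_mem_star1 : (Sum.inl w : α ⊕ α × Fin (k + 1)) ∈ star1 k v ↔ w = v := by
  simp [star1]

@[simp]
lemma inr_mem_star1 : Sum.inr (w, i) ∈ star1 k v ↔ w = v ∧ (i : ℕ) < k - 1 := by
  simp [star1, and_comm, eq_comm]

@[simp]
lemma inl_not_mem_star2 : (Sum.inl w : α ⊕ α × Fin (k + 1)) ∉ star2 k v := by
  simp [star2]

@[simp]
lemma inr_mem_star2 : Sum.inr (w, i) ∈ star2 k v ↔ w = v ∧ 1 ≤ (i : ℕ) := by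
  simp [star2, and_comm, eq_comm]

end Membership

def base {k : ℕ} : α ⊕ α × Fin (k + 1) → α := Sum.elim id Prod.fst

lemma base_eq_of_mem_star1 {k : ℕ} {v : α} {x : α ⊕ α × Fin (k + 1)} (hx : x ∈ star1 k v) :
    base x = v := by
  rcases x with w | ⟨w, i⟩ <;> simp_all [base]

lemma base_eq_of_mem_star2 {k : ℕ} {v : α} {x : α ⊕ α × Fin (k + 1)} (hx : x ∈ star2 k v) :
    base x = v := by
  rcases x with w | ⟨w, i⟩ <;> simp_all [base]

variable [Fintype α] [DecidableEq α]

noncomputable def attachStars (k : ℕ) (EF : Finset (Finset α)) :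
    Finset (Finset (α ⊕ α × Fin (k + 1))) :=
  EF.image (fun e => e.image Sum.inl) ∪ univ.image (star1 k) ∪ univ.image (star2 k)

lemma star1_mem_attachStars (k : ℕ) (EF : Finset (Finset α)) (v : α) :
    star1 k v ∈ attachStars k EF := by
  simp [attachStars]

lemma star2_mem_attachStars (k : ℕ) (EF : Finset (Finset α)) (v : α) :
    star2 k v ∈ attachStars k EF := by
  simp [attachStars]

lemma eq_star_of_inr_mem {k : ℕ} {EF : Finset (Finset α)} {e} (he : e ∈ attachStars k EF)
    {v : α} {i : Fin (k + 1)} (hvi : Sum.inr (v, i) ∈ e) : e = star1 k v ∨ e = star2 k v := by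
  simp only [attachStars, mem_union, mem_image, mem_univ, true_and] at he
  rcases he with (⟨f, -, rfl⟩ | ⟨w, rfl⟩) | ⟨w, rfl⟩
  · simp at hvi
  · exact .inl (by rw [((inr_mem_star1 ..).1 hvi).1])
  · exact .inr (by rw [((inr_mem_star2 ..).1 hvi).1])

/-- `{v, v₂ : v ∈ V(F)}`. -/
noncomputable def starDominatingSet (k : ℕ) : Finset (α ⊕ α × Fin (k + 1)) :=
  univ.image Sum.inl ∪ univ.image (fun v => Sum.inr (v, 1))

lemma card_starDominatingSet (k : ℕ) :
    (starDominatingSet k : Finset (α ⊕ α × Fin (k + 1))).card = 2 * Fintype.card α := by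
  rw [starDominatingSet, card_union_of_disjoint, card_image_of_injective _ Sum.inl_injective,
    card_image_of_injective _ (fun a b h => by simpa using h), card_univ, two_mul]
  simp [disjoint_left]

lemma isTotalDominating_starDominatingSet {k : ℕ} (hk : 3 ≤ k) (EF : Finset (Finset α)) :
    IsTotalDominating (attachStars k EF) (starDominatingSet k) := by
  have h1 : ((1 : Fin (k + 1)) : ℕ) = 1 :=
    (Fin.val_one' _).trans (Nat.mod_eq_of_lt (by omega))
  have hv₂ : ∀ v : α, Sum.inr (v, 1) ∈ starDominatingSet k := by simp [starDominatingSet]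
  rintro (v | ⟨v, i⟩)
  · refine ⟨_, hv₂ v, by simp, star1 k v, star1_mem_attachStars k EF v, by simp, ?_⟩
    simp only [inr_mem_star1, h1, true_and]
    omega
  · by_cases hi : (i : ℕ) < k - 1
    · exact ⟨Sum.inl v, by simp [starDominatingSet], by simp,
        star1 k v, star1_mem_attachStars k EF v, by simp [hi], by simp⟩
    · refine ⟨_, hv₂ v, ?_, star2 k v, star2_mem_attachStars k EF v, ?_,
        by simp only [inr_mem_star2, h1, true_and, le_refl]⟩
      · simp only [ne_eq, Sum.inr.injEq, Prod.mk.injEq, true_and]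
        rintro rfl
        exact hi (by rw [h1]; omega)
      · simp only [inr_mem_star2, true_and]
        omega

lemma two_le_card_filter_base {k : ℕ} {EF : Finset (Finset α)} {D : Finset (α ⊕ α × Fin (k + 1))}
    (hD : IsTotalDominating (attachStars k EF) D) (v : α) :
    2 ≤ (D.filter (fun x => base x = v)).card := by
  obtain ⟨u, huD, -, e, he, hlast, hue⟩ := hD (Sum.inr (v, Fin.last k))
  have he₂ : e = star2 k v := by
    refine (eq_star_of_inr_mem he hlast).resolve_left ?_
    rintro rfl
    simp only [inr_mem_star1, true_and, Fin.val_last] at hlast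
    omega
  subst he₂
  obtain ⟨j, rfl⟩ : ∃ j : Fin (k + 1), u = Sum.inr (v, j) := by
    rcases u with w | ⟨w, j⟩
    · simp at hue
    · exact ⟨j, by rw [((inr_mem_star2 ..).1 hue).1]⟩
  obtain ⟨w, hwD, hwu, f, hf, hjf, hwf⟩ := hD (Sum.inr (v, j))
  have hw : base w = v := by
    rcases eq_star_of_inr_mem hf hjf with rfl | rfl
    exacts [base_eq_of_mem_star1 hwf, base_eq_of_mem_star2 hwf]
  exact one_lt_card.2 ⟨_, mem_filter.2 ⟨huD, base_eq_of_mem_star2 hue⟩,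
    w, mem_filter.2 ⟨hwD, hw⟩, hwu⟩

lemma two_mul_card_le_of_isTotalDominating {k : ℕ} {EF : Finset (Finset α)}
    {D : Finset (α ⊕ α × Fin (k + 1))} (hD : IsTotalDominating (attachStars k EF) D) :
    2 * Fintype.card α ≤ D.card := by
  rw [card_eq_sum_card_fiberwise (f := base) (t := univ) (fun _ _ => mem_univ _),
    Fintype.card, mul_comm, ← smul_eq_mul, ← sum_const]
  exact sum_le_sum fun v _ => two_le_card_filter_base hD v

theorem gammat_attachStars {k : ℕ} (hk : 3 ≤ k) (EF : Finset (Finset α)) :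
    gammat (attachStars k EF) = 2 * Fintype.card α := by
  rw [← card_starDominatingSet k]
  exact gammat_eq_of_isTotalDominating (isTotalDominating_starDominatingSet hk EF)
    fun D hD => (card_starDominatingSet k).trans_le (two_mul_card_le_of_isTotalDominating hD)

end StarGadget

theorem stmt17_general {α : Type*} [Fintype α] [DecidableEq α] (k : ℕ) (hk : 3 ≤ k)
    (EF : Finset (Finset α)) :
    (gammat (EF.image (fun e => e.image Sum.inl) ∪
        univ.image (star1 k) ∪ univ.image (star2 k)) : ℝ) =
      2 * Fintype.card (α ⊕ α × Fin (k + 1)) / ((k : ℝ) + 2) := by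
  rw [← StarGadget.attachStars, StarGadget.gammat_attachStars hk]
  simp only [Fintype.card_sum, Fintype.card_prod, Fintype.card_fin]
  field_simp
  push_cast
  ring

/-- Let `k ≥ 3`, let `F` be a `k`-uniform hypergraph with no isolated vertices,
no isolated edges, no multiple edges, and with no two edges intersecting in
exactly `k−1` vertices; let `H` be obtained from `F` by adding, for each vertex
`v` of `F`, `k+1` new vertices `v₁, …, v_{k+1}` and the two new `k`-edges
`{v, v₁, …, v_{k−1}}` and `{v₂, …, v_{k+1}}`. Then `γ_t(H) = 2·n(H)/(k+2)`. -/
theorem stmt17 {α : Type*} [Fintype α] [DecidableEq α] (k : ℕ) (hk : 3 ≤ k)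
    (EF : Finset (Finset α)) (hu : Uniform k EF)
    (hv : ∀ v : α, ∃ e ∈ EF, v ∈ e) (he : NoIsolatedEdge EF)
    (hstar : ∀ e ∈ EF, ∀ f ∈ EF, e ≠ f → (e ∩ f).card ≠ k - 1) :
    (gammat (EF.image (fun e => e.image Sum.inl) ∪
        univ.image (star1 k) ∪ univ.image (star2 k)) : ℝ) =
      2 * Fintype.card (α ⊕ α × Fin (k + 1)) / ((k : ℝ) + 2) :=
  stmt17_general k hk EF
end
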